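/- arXiv:2204.06431 — 2 statements merged into one kernel-verified Lean document; each statement's English description precedes it below -/
import Mathlib

section
/- The junction Riemann problem linear system for three pipes meeting at a vertex—namely q¹* = q²* + q³*, ρ¹* = ρ²*, ρ¹* = ρ³*, ρ¹* - ρ¹₀ + (q¹* - q¹₀)/a = 0, ρ²* - ρ²₀ - (q²* - q²₀)/a = 0, ρ³* - ρ³₀ - (q³* - q³₀)/a = 0—has a unique solution (ρ¹*, ρ²*, ρ³*, q¹*, q²*, q³*) for any initial data (ρᵏ₀, qᵏ₀), k=1,2,3, and any a > 0. -/
/-!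
Each outgoing Riemann invariant expresses the flux `qᵏ*` affinely in the common junction
density `ρ*`, with slope `-a` on the incoming pipe and `+a` on the two outgoing ones. Mass
conservation then becomes the single linear equation `3 a ρ* = q¹₀ - q²₀ - q³₀ + a (ρ¹₀ + ρ²₀ + ρ³₀)`,
whose coefficient `3 a` is nonzero.
-/

section JunctionRiemannProblem

variable {a ρ ρ₀ q q₀ : ℝ}

theorem sub_add_div_eq_zero_iff_eq_sub_mul (ha : a ≠ 0) :
    ρ - ρ₀ + (q - q₀) / a = 0 ↔ q = q₀ - a * (ρ - ρ₀) := by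
  constructor <;> intro h
  · field_simp at h; linarith
  · rw [h]; field_simp; ring

theorem sub_sub_div_eq_zero_iff_eq_add_mul (ha : a ≠ 0) :
    ρ - ρ₀ - (q - q₀) / a = 0 ↔ q = q₀ + a * (ρ - ρ₀) := by
  constructor <;> intro h
  · field_simp at h; linarith
  · rw [h]; field_simp; ring

noncomputable def junctionDensity (a ρ10 ρ20 ρ30 q10 q20 q30 : ℝ) : ℝ :=
  ((q10 - q20 - q30) / a + ρ10 + ρ20 + ρ30) / 3

variable {ρ10 ρ20 ρ30 q10 q20 q30 : ℝ}

theorem mass_balance_iff_eq_junctionDensity (ha : a ≠ 0) :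
    q10 - a * (ρ - ρ10) = (q20 + a * (ρ - ρ20)) + (q30 + a * (ρ - ρ30)) ↔
      ρ = junctionDensity a ρ10 ρ20 ρ30 q10 q20 q30 := by
  rw [junctionDensity]
  constructor <;> intro h
  · field_simp; linarith
  · rw [h]; field_simp; ring

theorem junction_system_iff (ha : a ≠ 0) {ρ1 ρ2 ρ3 q1 q2 q3 : ℝ} :
    (q1 = q2 + q3 ∧ a ^ 2 * ρ1 = a ^ 2 * ρ2 ∧ a ^ 2 * ρ1 = a ^ 2 * ρ3 ∧
        ρ1 - ρ10 + (q1 - q10) / a = 0 ∧ ρ2 - ρ20 - (q2 - q20) / a = 0 ∧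
        ρ3 - ρ30 - (q3 - q30) / a = 0) ↔
      let ρ := junctionDensity a ρ10 ρ20 ρ30 q10 q20 q30
      ρ1 = ρ ∧ ρ2 = ρ ∧ ρ3 = ρ ∧ q1 = q10 - a * (ρ - ρ10) ∧ q2 = q20 + a * (ρ - ρ20) ∧
        q3 = q30 + a * (ρ - ρ30) := by
  simp only [mul_right_inj' (pow_ne_zero 2 ha), sub_add_div_eq_zero_iff_eq_sub_mul ha,
    sub_sub_div_eq_zero_iff_eq_add_mul ha]
  constructor
  · rintro ⟨hmass, rfl, rfl, rfl, rfl, rfl⟩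
    obtain rfl := (mass_balance_iff_eq_junctionDensity ha).1 hmass
    exact ⟨rfl, rfl, rfl, rfl, rfl, rfl⟩
  · rintro ⟨rfl, rfl, rfl, rfl, rfl, rfl⟩
    exact ⟨(mass_balance_iff_eq_junctionDensity ha).2 rfl, rfl, rfl, rfl, rfl, rfl⟩

end JunctionRiemannProblem

/-- The junction Riemann problem for three pipes meeting at a vertex has a
unique solution for any initial data and any wave speed `a > 0`. -/
theorem junction_riemann_problem_unique_solution
    (a : ℝ) (ha : 0 < a) (ρ10 ρ20 ρ30 q10 q20 q30 : ℝ) :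
    ∃! s : ℝ × ℝ × ℝ × ℝ × ℝ × ℝ,
      let (ρ1, ρ2, ρ3, q1, q2, q3) := s
      q1 = q2 + q3 ∧
      a^2 * ρ1 = a^2 * ρ2 ∧
      a^2 * ρ1 = a^2 * ρ3 ∧
      ρ1 - ρ10 + (q1 - q10) / a = 0 ∧
      ρ2 - ρ20 - (q2 - q20) / a = 0 ∧
      ρ3 - ρ30 - (q3 - q30) / a = 0 := by
  set ρ := junctionDensity a ρ10 ρ20 ρ30 q10 q20 q30
  refine ⟨(ρ, ρ, ρ, q10 - a * (ρ - ρ10), q20 + a * (ρ - ρ20), q30 + a * (ρ - ρ30)), ?_, ?_⟩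
  · exact (junction_system_iff ha.ne').2 ⟨rfl, rfl, rfl, rfl, rfl, rfl⟩
  · rintro ⟨ρ1, ρ2, ρ3, q1, q2, q3⟩ h
    obtain ⟨rfl, rfl, rfl, rfl, rfl, rfl⟩ := (junction_system_iff ha.ne').1 h
    rfl
end

section
/- If the cell-average data is monotone nondecreasing (U_{i-1} ≤ U_i ≤ U_{i+1} for all i), then the minmod-reconstructed piecewise linear function is globally nondecreasing; in particular the left interface value of cell i+1 is ≥ the right interface value of cell i: U_i + (Δx/2)σ_i ≤ U_{i+1} - (Δx/2)σ_{i+1}. -/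
/-! Each minmod slope is nonnegative and at most both adjacent difference quotients; the two
slopes meeting at an interface are therefore bounded by the same quotient
`(U (i + 1) - U i) / Δx`, and adding the two bounds gives the interface inequality. -/

/-- The minmod limiter. -/
noncomputable def minmod (a₁ a₂ : ℝ) : ℝ :=
  if Real.sign a₁ = Real.sign a₂ then Real.sign a₁ * min |a₁| |a₂| else 0

theorem minmod_comm (a b : ℝ) : minmod a b = minmod b a := by
  unfold minmod
  split_ifs with hab hba hba
  · rw [hab, min_comm]
  · exact absurd hab.symm hba
  · exact absurd hba.symm hab
  · rfl

theorem minmod_nonneg {a : ℝ} (b : ℝ) (ha : 0 ≤ a) : 0 ≤ minmod a b := by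
  unfold minmod
  split_ifs
  · rcases ha.eq_or_lt with rfl | ha'
    · simp
    · rw [Real.sign_of_pos ha', one_mul]
      positivity
  · exact le_rfl

theorem minmod_le_left {a : ℝ} (b : ℝ) (ha : 0 ≤ a) : minmod a b ≤ a := by
  unfold minmod
  split_ifs
  · rcases ha.eq_or_lt with rfl | ha'
    · simp
    · rw [Real.sign_of_pos ha', one_mul]
      exact (min_le_left _ _).trans_eq (abs_of_pos ha')
  · exact ha

theorem minmod_le_right (a : ℝ) {b : ℝ} (hb : 0 ≤ b) : minmod a b ≤ b :=
  minmod_comm a b ▸ minmod_le_left a hb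

/-- If the cell averages are monotone nondecreasing, then the minmod
reconstruction is globally nondecreasing: the slopes are nonnegative and the
left interface value of cell `i+1` dominates the right interface value of
cell `i`. -/
theorem minmod_reconstruction_monotone (Δx : ℝ) (hΔx : 0 < Δx)
    (U : ℤ → ℝ) (hmono : ∀ i : ℤ, U i ≤ U (i + 1))
    (σ : ℤ → ℝ)
    (hσ : ∀ i : ℤ, σ i = minmod ((U i - U (i - 1)) / Δx) ((U (i + 1) - U i) / Δx)) :
    (∀ i : ℤ, 0 ≤ σ i) ∧
    (∀ i : ℤ, U i + (Δx / 2) * σ i ≤ U (i + 1) - (Δx / 2) * σ (i + 1)) := by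
  have hfwd : ∀ i, 0 ≤ (U (i + 1) - U i) / Δx := fun i =>
    div_nonneg (sub_nonneg.2 (hmono i)) hΔx.le
  have hbwd : ∀ i, 0 ≤ (U i - U (i - 1)) / Δx := fun i => by
    simpa using hfwd (i - 1)
  refine ⟨fun i => hσ i ▸ minmod_nonneg _ (hbwd i), fun i => ?_⟩
  have hright : Δx * σ i ≤ U (i + 1) - U i :=
    (le_div_iff₀' hΔx).1 (hσ i ▸ minmod_le_right _ (hfwd i))
  have hleft : Δx * σ (i + 1) ≤ U (i + 1) - U i :=
    (le_div_iff₀' hΔx).1 (by simpa [hσ (i + 1)] using minmod_le_left _ (hbwd (i + 1)))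
  linarith
end
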